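/- arXiv:2506.11607 — 6 statements merged into one kernel-verified Lean document; each statement's English description precedes it below -/
import Mathlib

section
/- Let P be a forcing notion and κ an infinite cardinal. If cf(κ) ≥ ℵ*(P) (the Lindenbaum number of the set of conditions of P), or if P is κ⁺-distributive, then P is κ-descending distributive. -/
universe u

/-- A subset `D` of a forcing notion is *open dense* if it is downward closed and
for every condition `p` there is `q ∈ D` with `q ≤ p`. -/
def IsOpenDense {P : Type*} [Preorder P] (D : Set P) : Prop :=
  (∀ p ∈ D, ∀ q, q ≤ p → q ∈ D) ∧ ∀ p : P, ∃ q ∈ D, q ≤ p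

/-- A forcing notion `P` is `κ`-descending distributive if for every decreasing sequence
`(D_α)_{α<κ}` of open dense subsets, the intersection `⋂_{α<κ} D_α` is open dense. -/
def DescDist (P : Type*) [Preorder P] (κ : Cardinal) : Prop :=
  ∀ D : Ordinal → Set P,
    (∀ α, α < κ.ord → IsOpenDense (D α)) →
    (∀ α β : Ordinal, α ≤ β → β < κ.ord → D β ⊆ D α) →
    IsOpenDense (⋂ α ∈ Set.Iio κ.ord, D α)

/-- A forcing notion `P` is `λ`-distributive if for every ordinal `γ < λ` and every family
`(D_α)_{α<γ}` of open dense subsets of `P`, the intersection is open dense. -/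
def Distributive (P : Type*) [Preorder P] (lam : Cardinal) : Prop :=
  ∀ γ : Ordinal, γ < lam.ord → ∀ D : Ordinal → Set P,
    (∀ α, α < γ → IsOpenDense (D α)) →
    IsOpenDense (⋂ α ∈ Set.Iio γ, D α)

/-- The Lindenbaum number `ℵ*(X)`: the least ordinal `α` such that `|α| ≤* |X|` fails,
i.e. such that `α ≠ 0` and there is no surjection from `X` onto `α`. -/
noncomputable def lindenbaumOrd (X : Type u) : Ordinal.{u} :=
  sInf {α : Ordinal.{u} | ¬ (α = 0 ∨ ∃ f : X → α.ToType, Function.Surjective f)}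

/-!
If the intersection of a descending sequence `(D_α)_{α<κ}` of open dense sets misses every
extension of `p`, then choosing for each `q ≤ p` a stage `α_q < κ` with `q ∉ D_{α_q}` gives a
family of fewer than `cf(κ)` ordinals (there are at most `|P| < ℵ*(P) ≤ cf(κ)` of them), so it is
bounded by some `β < κ`; an extension of `p` in `D_β` then lies in every `D_{α_q}`, which is
absurd. Under `κ⁺`-distributivity the claim is immediate, as `κ < κ⁺`.
-/

open Cardinal

theorem lindenbaumOrd_ne_zero_and_not_surjective (X : Type u) :
    lindenbaumOrd X ≠ 0 ∧ ∀ f : X → (lindenbaumOrd X).ToType, ¬ f.Surjective := by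
  have hmem : ¬ (lindenbaumOrd X = 0 ∨
      ∃ f : X → (lindenbaumOrd X).ToType, f.Surjective) := by
    refine csInf_mem (s := {α : Ordinal.{u} | ¬ (α = 0 ∨ ∃ f : X → α.ToType, f.Surjective)})
      ⟨(Order.succ #X).ord, ?_⟩
    rintro (h0 | ⟨f, hf⟩)
    · exact (Order.succ_ne_bot #X) (ord_eq_zero.mp h0)
    · have hle := mk_le_of_surjective hf
      rw [mk_toType, card_ord] at hle
      exact (Order.lt_succ #X).not_ge hle
  simpa only [not_or, not_exists] using hmem

theorem mk_lt_card_lindenbaumOrd (X : Type u) : #X < (lindenbaumOrd X).card := by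
  obtain ⟨hne, hsurj⟩ := lindenbaumOrd_ne_zero_and_not_surjective X
  by_contra! hle
  rw [← mk_toType] at hle
  obtain ⟨e⟩ := (le_def _ _).mp hle
  have : Nonempty (lindenbaumOrd X).ToType := Ordinal.nonempty_toType_iff.mpr hne
  exact hsurj _ (Function.invFun_surjective e.injective)

theorem IsOpenDense.biInter_of_mk_lt_cof {P : Type u} [Preorder P] {o : Ordinal.{u}}
    {D : Ordinal → Set P} (hD : ∀ α < o, IsOpenDense (D α))
    (hanti : ∀ α β : Ordinal, α ≤ β → β < o → D β ⊆ D α) (hP : #P < o.cof) :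
    IsOpenDense (⋂ α ∈ Set.Iio o, D α) := by
  refine ⟨fun q hq r hr => ?_, fun p => ?_⟩
  · simp only [Set.mem_iInter₂] at hq ⊢
    exact fun α hα => (hD α hα).1 q (hq α hα) r hr
  by_contra! hmiss
  have hdrop : ∀ q : {q : P // q ≤ p}, ∃ α < o, q.1 ∉ D α := by
    intro q
    by_contra! hq
    exact hmiss q.1 (Set.mem_iInter₂.mpr hq) q.2
  choose stage hstage_lt hstage_notMem using hdrop
  have hsup : ⨆ q, stage q < o :=
    Ordinal.iSup_lt_of_lt_cof ((mk_subtype_le _).trans_lt hP) hstage_lt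
  obtain ⟨q, hqD, hqp⟩ := (hD _ hsup).2 p
  exact hstage_notMem ⟨q, hqp⟩
    (hanti _ _ (Ordinal.le_iSup stage ⟨q, hqp⟩) hsup hqD)

theorem descDist_of_mk_lt_cof {P : Type u} [Preorder P] {κ : Cardinal.{u}}
    (hP : #P < κ.ord.cof) : DescDist P κ :=
  fun _ hD hanti => IsOpenDense.biInter_of_mk_lt_cof hD hanti hP

theorem Distributive.descDist {P : Type*} [Preorder P] {lam κ : Cardinal}
    (h : Distributive P lam) (hκ : κ < lam) : DescDist P κ :=
  fun D hD _ => h κ.ord (ord_lt_ord.mpr hκ) D hD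

theorem statement2_general {P : Type u} [PartialOrder P] (κ : Cardinal.{u})
    (h : (lindenbaumOrd P).card ≤ κ.ord.cof ∨ Distributive P (Order.succ κ)) :
    DescDist P κ := by
  rcases h with hcof | hdist
  · exact descDist_of_mk_lt_cof ((mk_lt_card_lindenbaumOrd P).trans_le hcof)
  · exact hdist.descDist (Order.lt_succ κ)

/-- If `cf(κ) ≥ ℵ*(P)` or `P` is `κ⁺`-distributive, then `P` is `κ`-descending
distributive. -/
theorem statement2 {P : Type u} [PartialOrder P] [OrderTop P] (κ : Cardinal.{u})
    (hκ : Cardinal.aleph0 ≤ κ)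
    (h : (lindenbaumOrd P).card ≤ κ.ord.cof ∨ Distributive P (Order.succ κ)) :
    DescDist P κ :=
  statement2_general κ h
end

section
/- Let P be a forcing notion and κ an infinite cardinal. Then P is κ-descending distributive if and only if for every sequence (A_α)_{α<κ} of maximal antichains of P, the set of conditions q ∈ P for which there exists an unbounded set I ⊆ κ such that for all α ∈ I and all p ∈ A_α, if p is compatible with q then q ≤ p, is dense in P. -/
universe u v

/-- Two conditions are compatible if they have a common extension. -/
def Compat {P : Type*} [Preorder P] (p q : P) : Prop := ∃ r, r ≤ p ∧ r ≤ q

/-- A maximal antichain: a set of pairwise incompatible conditions such that every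
condition is compatible with some element of it. -/
def IsMaxAntichainForcing {P : Type*} [Preorder P] (A : Set P) : Prop :=
  (∀ p ∈ A, ∀ q ∈ A, p ≠ q → ¬ Compat p q) ∧ ∀ p : P, ∃ q ∈ A, Compat p q

/-!
For the forward direction, let `D_β` be the set of conditions lying below an element of some
`A_α` with `β ≤ α < κ`: these sets are open dense and decreasing, so a condition `q` in their
intersection lies below an element of `A_α` for unboundedly many `α`, and for such `α` it is
compatible with no other element of the antichain `A_α`. Conversely, given decreasing open dense
sets `D_α`, choose maximal antichains `A_α ⊆ D_α`; a condition `q` deciding `A_α` for unboundedly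
many `α` lies below an element of `A_α ⊆ D_α`, hence in `D_α`, hence in every `D_β` with `β ≤ α`.
-/

section Preorder

variable {P : Type*} [Preorder P]

lemma Compat.symm {p q : P} (h : Compat p q) : Compat q p :=
  let ⟨r, hrp, hrq⟩ := h
  ⟨r, hrq, hrp⟩

lemma Compat.mono_right {p q q' : P} (h : Compat p q) (hq : q ≤ q') : Compat p q' :=
  let ⟨r, hrp, hrq⟩ := h
  ⟨r, hrp, hrq.trans hq⟩

lemma IsMaxAntichainForcing.le_of_compat {A : Set P} (hA : IsMaxAntichainForcing A)
    {q r r' : P} (hr : r ∈ A) (hr' : r' ∈ A) (hqr : q ≤ r) (hc : Compat r' q) : q ≤ r' := by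
  obtain rfl | hne := eq_or_ne r' r
  · exact hqr
  · exact absurd (hc.mono_right hqr) (hA.1 r' hr' r hr hne)

lemma IsOpenDense.exists_isMaxAntichainForcing_subset {D : Set P} (hD : IsOpenDense D) :
    ∃ A ⊆ D, IsMaxAntichainForcing A := by
  obtain ⟨m, hm⟩ := zorn_subset {A : Set P | A ⊆ D ∧ A.Pairwise fun p q => ¬ Compat p q}
    fun c hc hchain =>
      ⟨⋃₀ c, ⟨Set.sUnion_subset fun s hs => (hc hs).1,
        (Set.pairwise_sUnion hchain.directedOn).2 fun s hs => (hc hs).2⟩,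
        fun _ => Set.subset_sUnion_of_mem⟩
  refine ⟨m, hm.prop.1, fun p hp q hq hpq => hm.prop.2 hp hq hpq, fun p => ?_⟩
  obtain ⟨q, hqD, hqp⟩ := hD.2 p
  by_contra! h
  have hqm : ∀ r ∈ m, ¬ Compat q r := fun r hr hc => h r hr (hc.symm.mono_right hqp).symm
  have hq_not_mem : q ∉ m := fun hq => hqm q hq ⟨q, le_rfl, le_rfl⟩
  have hins : insert q m ∈ {A : Set P | A ⊆ D ∧ A.Pairwise fun p q => ¬ Compat p q} :=
    ⟨Set.insert_subset hqD hm.prop.1,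
      hm.prop.2.insert fun r hr _ => ⟨hqm r hr, fun hc => hqm r hr hc.symm⟩⟩
  exact hq_not_mem (hm.eq_of_subset hins (Set.subset_insert q m) ▸ Set.mem_insert q m)

-- In forcing terms: `q` decides which element of `A α` the generic filter meets.
def DecidesCofinally (A : Ordinal → Set P) (o : Ordinal) (q : P) : Prop :=
  ∃ I ⊆ Set.Iio o, (∀ β, β < o → ∃ α ∈ I, β ≤ α) ∧ ∀ α ∈ I, ∀ r ∈ A α, Compat r q → q ≤ r

def belowAntichainsFrom (A : Ordinal → Set P) (o β : Ordinal) : Set P :=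
  {q | ∃ α, β ≤ α ∧ α < o ∧ ∃ r ∈ A α, q ≤ r}

lemma isOpenDense_belowAntichainsFrom {A : Ordinal → Set P} {o β : Ordinal}
    (hA : IsMaxAntichainForcing (A β)) (hβ : β < o) :
    IsOpenDense (belowAntichainsFrom A o β) := by
  refine ⟨?_, fun x => ?_⟩
  · rintro x ⟨α, hβα, hα, r, hr, hxr⟩ y hyx
    exact ⟨α, hβα, hα, r, hr, hyx.trans hxr⟩
  · obtain ⟨r, hr, s, hsx, hsr⟩ := hA.2 x
    exact ⟨s, ⟨β, le_rfl, hβ, r, hr, hsr⟩, hsx⟩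

lemma belowAntichainsFrom_anti (A : Ordinal → Set P) (o : Ordinal) :
    Antitone (belowAntichainsFrom A o) := by
  rintro β γ hβγ x ⟨α, hγα, hα, hx⟩
  exact ⟨α, hβγ.trans hγα, hα, hx⟩

lemma DescDist.exists_le_decidesCofinally {κ : Cardinal} (hP : DescDist P κ)
    {A : Ordinal → Set P} (hA : ∀ α, α < κ.ord → IsMaxAntichainForcing (A α)) (p : P) :
    ∃ q ≤ p, DecidesCofinally A κ.ord q := by
  obtain ⟨q, hq, hqp⟩ := (hP (belowAntichainsFrom A κ.ord)
    (fun β hβ => isOpenDense_belowAntichainsFrom (hA β hβ) hβ)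
    (fun β γ hβγ _ => belowAntichainsFrom_anti A κ.ord hβγ)).2 p
  simp only [Set.mem_iInter, Set.mem_Iio] at hq
  refine ⟨q, hqp, {α | α < κ.ord ∧ ∃ r ∈ A α, q ≤ r}, fun α hα => hα.1, fun β hβ => ?_, ?_⟩
  · obtain ⟨α, hβα, hα, hr⟩ := hq β hβ
    exact ⟨α, ⟨hα, hr⟩, hβα⟩
  · rintro α ⟨hα, r, hr, hqr⟩ r' hr' hc
    exact (hA α hα).le_of_compat hr hr' hqr hc

lemma descDist_of_exists_le_decidesCofinally {κ : Cardinal}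
    (h : ∀ A : Ordinal → Set P, (∀ α, α < κ.ord → IsMaxAntichainForcing (A α)) →
      ∀ p : P, ∃ q ≤ p, DecidesCofinally A κ.ord q) :
    DescDist P κ := by
  intro D hD hanti
  refine ⟨fun x hx y hyx => ?_, fun p => ?_⟩
  · simp only [Set.mem_iInter] at hx ⊢
    exact fun α hα => (hD α hα).1 x (hx α hα) y hyx
  · have hA : ∀ α, ∃ A ⊆ D α, α < κ.ord → IsMaxAntichainForcing A := fun α => by
      by_cases hα : α < κ.ord
      · obtain ⟨A, hAD, hA⟩ := (hD α hα).exists_isMaxAntichainForcing_subset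
        exact ⟨A, hAD, fun _ => hA⟩
      · exact ⟨∅, Set.empty_subset _, fun h => absurd h hα⟩
    choose A hAD hA using hA
    obtain ⟨q, hqp, I, hI, hI_unbounded, hIq⟩ := h A hA p
    refine ⟨q, ?_, hqp⟩
    simp only [Set.mem_iInter, Set.mem_Iio]
    intro β hβ
    obtain ⟨α, hαI, hβα⟩ := hI_unbounded β hβ
    have hα : α < κ.ord := hI hαI
    obtain ⟨r, hr, hc⟩ := (hA α hα).2 q
    exact hanti β α hβα hα <| (hD α hα).1 r (hAD α hr) q (hIq α hαI r hr hc.symm)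

end Preorder

theorem statement5_general {P : Type*} [PartialOrder P] (κ : Cardinal) :
    DescDist P κ ↔
      ∀ A : Ordinal → Set P, (∀ α, α < κ.ord → IsMaxAntichainForcing (A α)) →
        ∀ p : P, ∃ q ≤ p,
          ∃ I : Set Ordinal, I ⊆ Set.Iio κ.ord ∧
            (∀ β, β < κ.ord → ∃ α ∈ I, β ≤ α) ∧
            (∀ α ∈ I, ∀ r ∈ A α, Compat r q → q ≤ r) :=
  ⟨fun hP _ hA => hP.exists_le_decidesCofinally hA, descDist_of_exists_le_decidesCofinally⟩

/-- `P` is `κ`-descending distributive iff for every `κ`-sequence of maximal antichains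
`(A_α)`, the set of `q` for which there is an unbounded `I ⊆ κ` such that for all `α ∈ I`
and `p ∈ A_α`, `p` compatible with `q` implies `q ≤ p`, is dense. -/
theorem statement5 {P : Type*} [PartialOrder P] [OrderTop P] (κ : Cardinal)
    (hκ : Cardinal.aleph0 ≤ κ) :
    DescDist P κ ↔
      ∀ A : Ordinal → Set P, (∀ α, α < κ.ord → IsMaxAntichainForcing (A α)) →
        ∀ p : P, ∃ q ≤ p,
          ∃ I : Set Ordinal, I ⊆ Set.Iio κ.ord ∧
            (∀ β, β < κ.ord → ∃ α ∈ I, β ≤ α) ∧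
            (∀ α ∈ I, ∀ r ∈ A α, Compat r q → q ≤ r) :=
  statement5_general κ
end

section
/- Let η ≥ ℵ₀ and λ > 0 be cardinals and let κ be an infinite regular cardinal. Then the forcing notion Add(η,λ) is κ-descending distributive if κ < cf(η) or κ > (η·λ)^{<η}, and Add(η,λ) is not κ-descending distributive if cf(η) ≤ κ ≤ η^{<η}·λ. -/
universe u

open Cardinal

/-- Conditions of the Cohen forcing `Add(η,λ)`: partial functions `p : λ × η → 2`
(coded by their functional graphs) whose domain has cardinality less than `η`. -/
def AddCond (η lam : Cardinal.{u}) : Type u :=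
  {s : Set ((lam.out × η.out) × Bool) //
    (∀ a b b', (a, b) ∈ s → (a, b') ∈ s → b = b') ∧
    Cardinal.mk (Prod.fst '' s) < η}

/-- `Add(η,λ)` is ordered by reverse inclusion of graphs: `q ≤ p` iff `q ⊇ p`. -/
instance (η lam : Cardinal.{u}) : PartialOrder (AddCond η lam) where
  le q p := p.1 ⊆ q.1
  le_refl p := subset_rfl
  le_trans a b c hab hbc := fun x hx => hab (hbc hx)
  le_antisymm a b hab hba := Subtype.ext (Set.Subset.antisymm hba hab)

/-!
For the positive half: if `κ < cf(η)`, unions of descending chains of length at most `κ` are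
conditions, so a recursion of length `κ` meets all the `D_α` below any given condition. If
`κ > (η·λ)^{<η}`, then `Add(η,λ)` has fewer than `κ = cf(κ)` conditions, so every decreasing
`κ`-sequence of dense sets has stabilised at some stage below `κ`.

For the negative half, one finds a relation "`p` tags `t`" between conditions and `t < κ` which
is preserved by extension, such that every condition extends to one tagging any prescribed `t`,
while the tags of a single condition are bounded in `κ`; then
`D_α = {p | p tags some t ≥ α}` are open dense, but their intersection is empty. The tags are:
* `κ = cf(η)`: being defined, on a fixed column, up to the `t`-th point of a cofinal sequence
  in `η`;
* `cf(η) < κ < η` (so `η` is a limit cardinal): in some block of size `μ < η`, row `t` has `μ`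
  many `true`s while the other `κ` rows are decided with fewer;
* `η < κ ≤ 2^ν` or `2^{<η} < κ ≤ η^ν` for some `ν < η`: writing a code of `t` of length `ν` on a
  block of `ν` fresh points;
* `η^{<η} < κ ≤ λ`: touching the `t`-th column.
-/

namespace AddForcing

open Set Ordinal

theorem mk_insert_image_Iio_le {α : Type u} {κ : Cardinal.{u}} (hκ : ℵ₀ ≤ κ) (a : α)
    (c : Ordinal.{u} → α) {γ : Ordinal.{u}} (hγ : γ ≤ κ.ord) :
    #(insert a (c '' Iio γ) : Set α) ≤ κ := by
  have hc : #(c '' Iio γ) ≤ γ.card := by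
    rw [← Cardinal.lift_le.{u + 1}]
    simpa using Cardinal.mk_image_le_lift (f := c) (s := Iio γ)
  calc #(insert a (c '' Iio γ) : Set α) ≤ #(c '' Iio γ) + 1 := Cardinal.mk_insert_le
    _ ≤ κ + 1 := by
      gcongr
      exact hc.trans (Cardinal.card_le_of_le_ord hγ)
    _ = κ := Cardinal.add_one_of_aleph0_le hκ

theorem mk_Iio_toType {o : Ordinal.{u}} (t : o.ToType) : #(Iio t) = (ToType.mk.symm t).1.card :=
  (@Ordinal.card_typein _ (· < ·) isWellOrder_lt t).symm

theorem exists_forall_lt_of_mk_lt {κ : Cardinal.{u}} (hκ : κ.IsRegular) {S : Set κ.ord.ToType}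
    (hS : #S < κ) : ∃ b, ∀ t ∈ S, t < b := by
  by_contra! h
  have := Order.cof_le (α := κ.ord.ToType) (s := S) h
  rw [Ordinal.cof_toType, hκ.cof_ord] at this
  exact this.not_gt hS

theorem mk_set_lt_le (α : Type u) (η : Cardinal.{u}) :
    #{t : Set α // #t < η} ≤ η * max #α ℵ₀ ^< η := by
  let piece : η.ord.ToType → Set {t : Set α // #t < η} :=
    fun ξ => {t | #t.1 ≤ (ToType.mk.symm ξ).1.card}
  have hcover : (univ : Set {t : Set α // #t < η}) ⊆ ⋃ ξ, piece ξ := fun t _ =>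
    mem_iUnion.2 ⟨ToType.mk ⟨(#t.1).ord, Cardinal.ord_lt_ord.2 t.2⟩, by simp [piece]⟩
  have hpiece : ∀ ξ, #(piece ξ) ≤ max #α ℵ₀ ^< η := fun ξ =>
    calc #(piece ξ) ≤ #{t : Set α // #t ≤ (ToType.mk.symm ξ).1.card} :=
          Cardinal.mk_le_of_injective (f := fun t => ⟨t.1.1, t.2⟩)
            fun t t' h => Subtype.ext (Subtype.ext (congrArg Subtype.val h :))
      _ ≤ max #α ℵ₀ ^ (ToType.mk.symm ξ).1.card := Cardinal.mk_bounded_set_le α _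
      _ ≤ max #α ℵ₀ ^< η := Cardinal.le_powerlt _ (Cardinal.lt_ord.1 (ToType.mk.symm ξ).2)
  calc #{t : Set α // #t < η} = #(univ : Set {t : Set α // #t < η}) := Cardinal.mk_univ.symm
    _ ≤ #(⋃ ξ, piece ξ) := Cardinal.mk_le_mk_of_subset hcover
    _ ≤ #η.ord.ToType * ⨆ ξ, #(piece ξ) := Cardinal.mk_iUnion_le piece
    _ ≤ η * max #α ℵ₀ ^< η := by
      rw [Cardinal.mk_ord_toType]
      exact mul_le_mul_right (ciSup_le' hpiece) η

theorem exists_lt_le_power_of_le_powerlt {c η κ : Cardinal.{u}} (hκ : κ.IsRegular) (hηκ : η < κ)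
    (h : κ ≤ c ^< η) : ∃ ν < η, κ ≤ c ^ ν := by
  by_contra! H
  let f : η.ord.ToType → Cardinal.{u} := fun ξ => c ^ (ToType.mk.symm ξ).1.card
  have hsup : c ^< η ≤ ⨆ ξ, f ξ := Cardinal.powerlt_le.2 fun ν hν =>
    le_ciSup_of_le Cardinal.bddAbove_of_small (ToType.mk ⟨ν.ord, Cardinal.ord_lt_ord.2 hν⟩)
      (by simp [f])
  have hlt : ⨆ ξ, f ξ < κ := Cardinal.iSup_lt_of_lt_cof_ord
    (by rwa [Cardinal.mk_ord_toType, hκ.cof_ord])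
    fun ξ => H _ (Cardinal.lt_ord.1 (ToType.mk.symm ξ).2)
  exact h.not_gt (hsup.trans_lt hlt)

theorem le_mk_diff {α : Type u} {s t : Set α} (hs : ℵ₀ ≤ #s) (ht : #t < #s) :
    #s ≤ #(s \ t : Set α) := by
  by_contra! h
  have hcov : #s ≤ #(s \ t : Set α) + #t :=
    (Cardinal.mk_le_mk_of_subset fun x hx => by by_cases hxt : x ∈ t <;> simp_all).trans
      (Cardinal.mk_union_le _ _)
  exact hcov.not_gt (Cardinal.add_lt_of_lt hs h ht)

section Forcing

variable {P : Type u} [Preorder P] {κ : Cardinal.{u}}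

theorem descDist_of_exists_mem_biInter
    (h : ∀ D : Ordinal → Set P, (∀ α < κ.ord, IsOpenDense (D α)) →
      (∀ α β : Ordinal, α ≤ β → β < κ.ord → D β ⊆ D α) →
      ∀ p, ∃ q ∈ ⋂ α ∈ Iio κ.ord, D α, q ≤ p) :
    DescDist P κ := fun D hD hdec =>
  ⟨fun p hp q hqp => mem_iInter₂.2 fun α hα => (hD α hα).1 p (mem_iInter₂.1 hp α hα) q hqp,
    h D hD hdec⟩

theorem descDist_of_mk_lt_cof (hP : #P < κ.ord.cof) : DescDist P κ := by
  classical
  refine descDist_of_exists_mem_biInter fun D hD hdec p => ?_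
  -- past every stage at which some condition drops out of the `D α`, they no longer change
  let f : P → Ordinal := fun q => if h : ∃ α < κ.ord, q ∉ D α then h.choose else 0
  have hf : ∀ q, f q < κ.ord := fun q => by
    by_cases h : ∃ α < κ.ord, q ∉ D α
    · simpa [f, h] using h.choose_spec.1
    · have hκ : κ.ord ≠ 0 := fun h0 => by simp [h0] at hP
      simpa [f, h] using pos_iff_ne_zero.2 hκ
  have hsup : ⨆ q, f q < κ.ord := Ordinal.iSup_lt_of_lt_cof hP hf
  obtain ⟨q, hq, hqp⟩ := (hD _ hsup).2 p
  refine ⟨q, mem_iInter₂.2 fun α hα => by_contra fun hqα => ?_, hqp⟩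
  have h : ∃ α < κ.ord, q ∉ D α := ⟨α, hα, hqα⟩
  have hfq : f q = h.choose := dif_pos h
  exact h.choose_spec.2 (hfq ▸ hdec _ _ (Ordinal.le_iSup f q) hsup hq)

theorem isChain_insert_image_Iio {c : Ordinal → P} {p : P} {γ : Ordinal}
    (hp : ∀ β < γ, c β ≤ p) (hc : ∀ β < γ, ∀ β' < β, c β ≤ c β') :
    IsChain (· ≤ ·) (insert p (c '' Iio γ)) := by
  refine IsChain.insert ?_ fun _ ⟨β, hβ, hcβ⟩ _ => Or.inr (hcβ ▸ hp β hβ)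
  rintro _ ⟨β, hβ, rfl⟩ _ ⟨β', hβ', rfl⟩ -
  rcases lt_trichotomy β β' with h | rfl | h
  · exact Or.inr (hc β' hβ' β h)
  · exact Or.inl le_rfl
  · exact Or.inl (hc β hβ β' h)

theorem descDist_of_isChain_bddBelow (hκ : ℵ₀ ≤ κ)
    (h : ∀ S : Set P, IsChain (· ≤ ·) S → #S ≤ κ → BddBelow S) : DescDist P κ := by
  classical
  refine descDist_of_exists_mem_biInter fun D hD _ p => ?_
  -- `c α ∈ D α` is chosen below a common lower bound of `p` and all earlier `c β`
  let lb : Set P → P := fun S => if hS : BddBelow S then hS.choose else p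
  let step : (α : Ordinal) → (∀ β < α, P) → P := fun α c =>
    let q := lb (insert p {x | ∃ β h, c β h = x})
    if hα : α < κ.ord then ((hD α hα).2 q).choose else q
  let c : Ordinal → P := WellFoundedLT.fix step
  have hc : ∀ α, c α = step α fun β _ => c β := WellFoundedLT.fix_eq step
  have hlb : ∀ γ ≤ κ.ord, (∀ β < γ, c β ≤ p) → (∀ β < γ, ∀ β' < β, c β ≤ c β') →
      lb (insert p (c '' Iio γ)) ∈ lowerBounds (insert p (c '' Iio γ)) := fun γ hγ hp hanti => by
    have hbdd := h _ (isChain_insert_image_Iio hp hanti) (mk_insert_image_Iio_le hκ p c hγ)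
    simpa [lb, hbdd] using hbdd.choose_spec
  have key : ∀ α < κ.ord, c α ∈ D α ∧ c α ≤ p ∧ ∀ β < α, c α ≤ c β := by
    intro α
    induction α using WellFoundedLT.induction with
    | _ α ih =>
      intro hα
      have hq := hlb α hα.le (fun β hβ => (ih β hβ (hβ.trans hα)).2.1)
        (fun β hβ => (ih β hβ (hβ.trans hα)).2.2)
      have hstep := ((hD α hα).2 (lb (insert p (c '' Iio α)))).choose_spec
      have hS : {x | ∃ β, ∃ h : β < α, c β = x} = c '' Iio α := by ext; simp
      have hcα : c α = ((hD α hα).2 (lb (insert p (c '' Iio α)))).choose := by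
        rw [hc]
        simp only [step, hS, dif_pos hα]
      rw [hcα]
      exact ⟨hstep.1, hstep.2.trans (hq (mem_insert _ _)),
        fun β hβ => hstep.2.trans (hq (mem_insert_of_mem _ ⟨β, hβ, rfl⟩))⟩
  have hq := hlb κ.ord le_rfl (fun β hβ => (key β hβ).2.1) (fun β hβ => (key β hβ).2.2)
  refine ⟨_, mem_iInter₂.2 fun α hα => ?_, hq (mem_insert _ _)⟩
  exact (hD α hα).1 _ (key α hα).1 _ (hq (mem_insert_of_mem _ ⟨α, hα, rfl⟩))

theorem not_descDist_of_tags [Nonempty P] (W : P → κ.ord.ToType → Prop)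
    (mono : ∀ p q, q ≤ p → ∀ t, W p t → W q t) (bdd : ∀ p, ∃ b, ∀ t, W p t → t < b)
    (ext : ∀ p t, ∃ q ≤ p, W q t) : ¬ DescDist P κ := by
  intro hP
  let D : Ordinal → Set P := fun α => {p | ∃ t, α ≤ (ToType.mk.symm t).1 ∧ W p t}
  have hD : ∀ α < κ.ord, IsOpenDense (D α) := fun α hα =>
    ⟨fun p ⟨t, hαt, hpt⟩ q hqp => ⟨t, hαt, mono p q hqp t hpt⟩, fun p => by
      obtain ⟨q, hqp, hq⟩ := ext p (ToType.mk ⟨α, hα⟩)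
      exact ⟨q, ⟨_, by simp, hq⟩, hqp⟩⟩
  obtain ⟨q, hq, -⟩ := (hP D hD fun α β hαβ _ p ⟨t, hβt, hpt⟩ => ⟨t, hαβ.trans hβt, hpt⟩).2
    (Classical.arbitrary P)
  obtain ⟨b, hb⟩ := bdd q
  obtain ⟨t, hbt, hqt⟩ := mem_iInter₂.1 hq _ (ToType.mk.symm b).2
  exact (hb t hqt).not_ge (ToType.mk.symm.le_iff_le.1 hbt)

end Forcing

namespace AddCond

variable {η lam : Cardinal.{u}}

def dom (p : AddCond η lam) : Set (lam.out × η.out) := Prod.fst '' p.1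

theorem nonempty_of_ne_zero (hη : η ≠ 0) : Nonempty (AddCond η lam) :=
  ⟨⟨∅, by simp, by simpa [pos_iff_ne_zero] using hη⟩⟩

theorem eq_of_mem {p : AddCond η lam} {a : lam.out × η.out} {b b' : Bool} (h : (a, b) ∈ p.1)
    (h' : (a, b') ∈ p.1) : b = b' :=
  p.2.1 a b b' h h'

theorem mk_dom_lt (p : AddCond η lam) : #(dom p) < η := p.2.2

theorem mem_dom {p : AddCond η lam} {a : lam.out × η.out} : a ∈ dom p ↔ ∃ b, (a, b) ∈ p.1 := by
  simp [dom]

theorem dom_mono {p q : AddCond η lam} (h : q ≤ p) : dom p ⊆ dom q := image_mono h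

theorem exists_forall_notMem_dom (p : AddCond η lam) {α β : Type u} (hα : η ≤ #α)
    {g : α × β → lam.out × η.out} (hg : Function.Injective g) : ∃ a, ∀ b, g (a, b) ∉ dom p := by
  by_contra! h
  have hcover : (univ : Set α) ⊆ Prod.fst '' (g ⁻¹' dom p) := fun a _ => by
    obtain ⟨b, hb⟩ := h a
    exact ⟨(a, b), hb, rfl⟩
  have := (Cardinal.mk_le_mk_of_subset hcover).trans
    (Cardinal.mk_image_le.trans (Cardinal.mk_preimage_of_injective g _ hg))
  rw [Cardinal.mk_univ] at this
  exact (mk_dom_lt p).not_ge (hα.trans this)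

def fill (hη : ℵ₀ ≤ η) (p : AddCond η lam) (A : Set (lam.out × η.out)) (hA : #A < η)
    (v : lam.out × η.out → Bool) : AddCond η lam :=
  ⟨p.1 ∪ {z | z.1 ∈ A \ dom p ∧ z.2 = v z.1}, by
    refine ⟨?_, ?_⟩
    · rintro a b b' (hb | ⟨⟨-, hnd⟩, hb⟩) (hb' | ⟨⟨-, hnd'⟩, hb'⟩)
      · exact eq_of_mem hb hb'
      · exact absurd (mem_dom.2 ⟨b, hb⟩) hnd'
      · exact absurd (mem_dom.2 ⟨b', hb'⟩) hnd
      · exact hb.trans hb'.symm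
    · have hsub : Prod.fst '' (p.1 ∪ {z | z.1 ∈ A \ dom p ∧ z.2 = v z.1}) ⊆ dom p ∪ A := by
        rintro _ ⟨z, hz | hz, rfl⟩
        exacts [Or.inl ⟨z, hz, rfl⟩, Or.inr hz.1.1]
      exact (Cardinal.mk_le_mk_of_subset hsub).trans_lt
        ((Cardinal.mk_union_le _ _).trans_lt (Cardinal.add_lt_of_lt hη (mk_dom_lt p) hA))⟩

section Fill

variable {hη : ℵ₀ ≤ η} {p : AddCond η lam} {A : Set (lam.out × η.out)} {hA : #A < η}
  {v : lam.out × η.out → Bool}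

theorem fill_le : fill hη p A hA v ≤ p := subset_union_left

theorem mem_fill_of_notMem_dom {a : lam.out × η.out} (ha : a ∈ A) (hap : a ∉ dom p) :
    (a, v a) ∈ (fill hη p A hA v).1 :=
  Or.inr ⟨⟨ha, hap⟩, rfl⟩

theorem subset_dom_fill : A ⊆ dom (fill hη p A hA v) := fun a ha => by
  by_cases hap : a ∈ dom p
  · exact dom_mono fill_le hap
  · exact mem_dom.2 ⟨_, mem_fill_of_notMem_dom ha hap⟩

end Fill

def trueSet (p : AddCond η lam) (R : Set (lam.out × η.out)) : Set (lam.out × η.out) :=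
  {z ∈ R | (z, true) ∈ p.1}

theorem trueSet_mono {p q : AddCond η lam} (h : q ≤ p) (R : Set (lam.out × η.out)) :
    trueSet p R ⊆ trueSet q R :=
  fun _ hz => ⟨hz.1, h hz.2⟩

theorem trueSet_eq_of_subset_dom {p q : AddCond η lam} (h : q ≤ p) {R : Set (lam.out × η.out)}
    (hR : R ⊆ dom p) : trueSet q R = trueSet p R := by
  refine Subset.antisymm (fun z hz => ⟨hz.1, ?_⟩) (trueSet_mono h R)
  obtain ⟨b, hb⟩ := mem_dom.1 (hR hz.1)
  rwa [eq_of_mem (h hb) hz.2] at hb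

theorem bddBelow_of_isChain (hη : ℵ₀ ≤ η) {S : Set (AddCond η lam)} (hS : IsChain (· ≤ ·) S)
    (hcard : #S < η.ord.cof) : BddBelow S := by
  have hdom : #(⋃ s ∈ S, dom s) < η :=
    (Cardinal.mk_biUnion_le _ S).trans_lt <| Cardinal.mul_lt_of_lt hη
      (hcard.trans_le (Ordinal.cof_ord_le η))
      (Cardinal.iSup_lt_of_lt_cof_ord hcard fun s => mk_dom_lt s.1)
  let q : AddCond η lam := ⟨⋃ s ∈ S, s.1, by
    refine ⟨fun a b b' hb hb' => ?_, by simpa [dom, image_iUnion₂] using hdom⟩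
    obtain ⟨s, hs, hb⟩ := mem_iUnion₂.1 hb
    obtain ⟨s', hs', hb'⟩ := mem_iUnion₂.1 hb'
    rcases hS.total hs hs' with h | h
    exacts [eq_of_mem hb (h hb'), eq_of_mem (h hb) hb']⟩
  exact ⟨q, fun s hs => subset_biUnion_of_mem (u := fun s : AddCond η lam => s.1) hs⟩

theorem mk_graph_lt (hη : ℵ₀ ≤ η) (p : AddCond η lam) : #p.1 < η :=
  calc #p.1 ≤ #(dom p ×ˢ (univ : Set Bool)) :=
        Cardinal.mk_le_mk_of_subset fun z hz => ⟨⟨z, hz, rfl⟩, trivial⟩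
    _ = #(dom p) * 2 := by simp [Cardinal.mk_congr (Equiv.Set.prod _ _)]
    _ < η := Cardinal.mul_lt_of_lt hη (mk_dom_lt p) (Cardinal.ofNat_lt_aleph0.trans_le hη)

theorem mk_le_powerlt (hη : ℵ₀ ≤ η) (hlam : 0 < lam) : #(AddCond η lam) ≤ (η * lam) ^< η := by
  have hηlam : η ≤ η * lam := le_mul_of_one_le_right' (Cardinal.one_le_iff_pos.2 hlam)
  have hinf : ℵ₀ ≤ η * lam := hη.trans hηlam
  have hbase : max #((lam.out × η.out) × Bool) ℵ₀ ≤ η * lam := by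
    refine max_le ?_ hinf
    calc #((lam.out × η.out) × Bool) = (η * lam) * 2 := by simp [mul_comm]
      _ ≤ (η * lam) * (η * lam) := by gcongr; exact Cardinal.ofNat_lt_aleph0.le.trans hinf
      _ = η * lam := Cardinal.mul_eq_self hinf
  have hη' : η ≤ (η * lam) ^< η := by
    refine hηlam.trans ?_
    simpa using Cardinal.le_powerlt (η * lam) (Cardinal.one_lt_aleph0.trans_le hη)
  calc #(AddCond η lam) ≤ #{t : Set ((lam.out × η.out) × Bool) // #t < η} :=
        Cardinal.mk_le_of_injective (f := fun p => ⟨p.1, mk_graph_lt hη p⟩)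
          fun p q h => Subtype.ext (congrArg Subtype.val h :)
    _ ≤ η * max #((lam.out × η.out) × Bool) ℵ₀ ^< η := mk_set_lt_le _ η
    _ ≤ η * (η * lam) ^< η := by
      gcongr
      exact Cardinal.powerlt_le.2 fun ν hν =>
        (Cardinal.power_le_power_right hbase).trans (Cardinal.le_powerlt _ hν)
    _ = (η * lam) ^< η :=
      Cardinal.mul_eq_right (hη.trans hη') hη' (Cardinal.aleph0_pos.trans_le hη).ne'

end AddCond

open AddCond

theorem descDist_of_lt_cof {η lam κ : Cardinal.{u}} (hη : ℵ₀ ≤ η) (hκ : ℵ₀ ≤ κ)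
    (h : κ < η.ord.cof) : DescDist (AddCond η lam) κ :=
  descDist_of_isChain_bddBelow hκ fun _ hS hSκ => bddBelow_of_isChain hη hS (hSκ.trans_lt h)

theorem descDist_of_powerlt_lt {η lam κ : Cardinal.{u}} (hη : ℵ₀ ≤ η) (hlam : 0 < lam)
    (hκ : κ.IsRegular) (h : (η * lam) ^< η < κ) : DescDist (AddCond η lam) κ :=
  descDist_of_mk_lt_cof ((mk_le_powerlt hη hlam).trans_lt (h.trans_eq hκ.cof_ord.symm))

theorem not_descDist_cof {η lam : Cardinal.{u}} (hη : ℵ₀ ≤ η) (hlam : 0 < lam) :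
    ¬ DescDist (AddCond η lam) η.ord.cof := by
  obtain ⟨i₀⟩ := Cardinal.nonempty_out hlam.ne'
  obtain ⟨e⟩ : Nonempty (η.ord.ToType ↪ η.out) := by simp [← Cardinal.le_def]
  obtain ⟨f, hf⟩ := Ordinal.exists_isFundamentalSeq (o := η.ord) rfl
  let F : η.ord.cof.ord.ToType → η.ord.ToType := fun t => ToType.mk (f (ToType.mk.symm t))
  have hF : Monotone F := fun s t hst =>
    ToType.mk.monotone (hf.strictMono.monotone (ToType.mk.symm.monotone hst))
  have hFcof : ∀ x, ∃ t, x ≤ F t := fun x => by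
    obtain ⟨_, ⟨i, rfl⟩, hi⟩ := hf.isCofinal_range (ToType.mk.symm x)
    exact ⟨ToType.mk i, by simpa [F] using (OrderIso.symm_apply_le ToType.mk).1 hi⟩
  let col : η.ord.ToType → lam.out × η.out := fun x => (i₀, e x)
  have hcol : Function.Injective col := fun x y h => e.injective (congrArg Prod.snd h)
  have := nonempty_of_ne_zero (lam := lam) (Cardinal.aleph0_pos.trans_le hη).ne'
  refine not_descDist_of_tags (fun p t => col '' Iic (F t) ⊆ dom p)
    (fun p q hqp t hp => hp.trans (dom_mono hqp)) (fun p => ?_) (fun p t => ?_)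
  · obtain ⟨x, hx⟩ := exists_forall_notMem_dom p (β := PUnit) (g := fun z => col z.1)
      (by simp) fun z w h => Prod.ext (hcol h) rfl
    obtain ⟨b, hb⟩ := hFcof x
    exact ⟨b, fun t ht => lt_of_not_ge fun hbt => hx ⟨⟩ (ht ⟨x, hb.trans (hF hbt), rfl⟩)⟩
  · have hA : #(col '' Iic (F t)) < η := Cardinal.mk_image_le.trans_lt
      (by simpa using Cardinal.mk_Iic_lt (F t) (by simp) (by simpa using hη))
    exact ⟨fill hη p _ hA fun _ => false, fill_le, subset_dom_fill⟩

theorem not_descDist_of_rows {η lam κ : Cardinal.{u}} (hη : ℵ₀ ≤ η) (hκ : κ.IsRegular)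
    (hκη : κ < η) {ι : Type u} (hι : #ι < κ) (μ : ι → Cardinal.{u}) (hμη : ∀ n, μ n < η)
    (hμ : ∀ ρ < η, ∃ n, ρ < μ n) (row : ι → κ.ord.ToType → Set (lam.out × η.out))
    (hrow : ∀ n v, #(row n v) = μ n)
    (hdisj : ∀ n, Pairwise fun v v' => Disjoint (row n v) (row n v')) :
    ¬ DescDist (AddCond η lam) κ := by
  classical
  have := nonempty_of_ne_zero (lam := lam) (Cardinal.aleph0_pos.trans_le hη).ne'
  -- `p` certifies `v` in block `n` when row `v` has `μ n` many `true`s while every other row of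
  -- the block is decided with fewer; so `p` certifies at most one `v` per block
  refine not_descDist_of_tags (fun p v => ∃ n, μ n ≤ #(trueSet p (row n v)) ∧
      ∀ v' ≠ v, row n v' ⊆ dom p ∧ #(trueSet p (row n v')) < μ n) ?_ (fun p => ?_) (fun p a => ?_)
  · rintro p q hqp v ⟨n, hv, hother⟩
    refine ⟨n, hv.trans (Cardinal.mk_le_mk_of_subset (trueSet_mono hqp _)), fun v' hv' => ?_⟩
    obtain ⟨hdom, hlt⟩ := hother v' hv'
    exact ⟨hdom.trans (dom_mono hqp), by rwa [trueSet_eq_of_subset_dom hqp hdom]⟩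
  · refine exists_forall_lt_of_mk_lt hκ (lt_of_le_of_lt (Cardinal.mk_le_of_injective
      (f := fun v : {v | _} => v.2.choose) fun v v' h => ?_) hι)
    by_contra hne
    have hv := v.2.choose_spec
    rw [show v.2.choose = v'.2.choose from h] at hv
    exact (hv.2 v'.1 fun h' => hne (Subtype.ext h'.symm)).2.not_ge v'.2.choose_spec.1
  · have hρ : max #(dom p) ℵ₀ < η := max_lt (mk_dom_lt p) (hκ.aleph0_le.trans_lt hκη)
    obtain ⟨n, hn⟩ := hμ _ hρ
    have hA : #(⋃ v, row n v) < η := (Cardinal.mk_iUnion_le _).trans_lt <| by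
      rw [Cardinal.mk_ord_toType]
      exact Cardinal.mul_lt_of_lt hη hκη ((ciSup_le' fun v => (hrow n v).le).trans_lt (hμη n))
    set q := fill hη p _ hA fun z => decide (z ∈ row n a)
    refine ⟨q, fill_le, n, ?_, fun v' hv' =>
      ⟨(subset_iUnion (row n) v').trans subset_dom_fill, ?_⟩⟩
    · have hsub : row n a \ dom p ⊆ trueSet q (row n a) := fun z hz => by
        have := mem_fill_of_notMem_dom (hη := hη) (hA := hA) (v := fun z => decide (z ∈ row n a))
          (mem_iUnion.2 ⟨a, hz.1⟩) hz.2
        exact ⟨hz.1, by simpa [hz.1] using this⟩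
      rw [← hrow n a] at hn ⊢
      exact (le_mk_diff ((le_max_right _ _).trans hn.le) ((le_max_left _ _).trans_lt hn)).trans
        (Cardinal.mk_le_mk_of_subset hsub)
    · have hsub : trueSet q (row n v') ⊆ dom p := by
        rintro z ⟨hz, hzp | ⟨-, hza⟩⟩
        · exact mem_dom.2 ⟨_, hzp⟩
        · exact ((hdisj n hv').ne_of_mem hz (of_decide_eq_true hza.symm) rfl).elim
      exact (Cardinal.mk_le_mk_of_subset hsub).trans_lt ((le_max_left _ _).trans_lt hn)

theorem not_descDist_of_cof_lt_of_lt {η lam κ : Cardinal.{u}} (hη : ℵ₀ ≤ η) (hlam : 0 < lam)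
    (hκ : κ.IsRegular) (hcof : η.ord.cof < κ) (hκη : κ < η) : ¬ DescDist (AddCond η lam) κ := by
  obtain ⟨i₀⟩ := Cardinal.nonempty_out hlam.ne'
  obtain ⟨s, hs, hs_card⟩ := Order.exists_cof_eq η.ord.ToType
  rw [Ordinal.cof_toType] at hs_card
  have hlim : Order.IsSuccLimit η := Cardinal.IsSingular.isSuccLimit ⟨hη, (hcof.trans hκη).ne⟩
  obtain ⟨J⟩ : Nonempty (s × κ.ord.ToType × η.ord.ToType ↪ η.out) := by
    rw [← Cardinal.le_def]
    simp only [Cardinal.mk_prod, Cardinal.lift_id, hs_card, Cardinal.mk_ord_toType,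
      Cardinal.mk_out]
    calc η.ord.cof * (κ * η) ≤ η * (η * η) := by
          gcongr
          exact (hcof.trans hκη).le
      _ = η := by rw [Cardinal.mul_eq_self hη, Cardinal.mul_eq_self hη]
  refine not_descDist_of_rows hη hκ hκη (ι := s) (hs_card ▸ hcof) (fun n => #(Iio n.1))
    (fun n => (mk_Iio_toType n.1).trans_lt (Cardinal.lt_ord.1 (ToType.mk.symm n.1).2))
    (fun ρ hρ => ?_) (fun n v => (fun x => (i₀, J (n, v, x))) '' Iio n.1)
    (fun n v => Cardinal.mk_image_eq fun x y h => by simpa using J.injective (congrArg Prod.snd h))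
    (fun n v v' hvv' => disjoint_left.2 ?_)
  · let t : η.ord.ToType :=
      ToType.mk ⟨(Order.succ ρ).ord, Cardinal.ord_lt_ord.2 (hlim.succ_lt hρ)⟩
    obtain ⟨n, hn, htn⟩ := hs t
    refine ⟨⟨n, hn⟩, (Order.lt_succ_of_not_isMax (not_isMax ρ)).trans_le ?_⟩
    calc Order.succ ρ = #(Iio t) := by simp [t, mk_Iio_toType]
      _ ≤ #(Iio n) := Cardinal.mk_le_mk_of_subset (Iio_subset_Iio htn)
  · rintro _ ⟨x, -, rfl⟩ ⟨y, -, h⟩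
    exact hvv' (Prod.ext_iff.1 (Prod.ext_iff.1 (J.injective (congrArg Prod.snd h))).2).1.symm

theorem not_descDist_of_le_two_power {η lam κ ν : Cardinal.{u}} (hη : ℵ₀ ≤ η) (hlam : 0 < lam)
    (hκ : κ.IsRegular) (hηκ : η < κ) (hν : ν < η) (hκν : κ ≤ 2 ^ ν) :
    ¬ DescDist (AddCond η lam) κ := by
  obtain ⟨i₀⟩ := Cardinal.nonempty_out hlam.ne'
  obtain ⟨J⟩ : Nonempty (η.out × ν.out ↪ η.out) := by
    rw [← Cardinal.le_def]
    simp only [Cardinal.mk_prod, Cardinal.lift_id, Cardinal.mk_out]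
    calc η * ν ≤ η * η := by gcongr
      _ = η := Cardinal.mul_eq_self hη
  obtain ⟨Y⟩ : Nonempty (κ.ord.ToType ↪ (ν.out → Bool)) := by
    simpa [← Cardinal.le_def] using hκν
  let g : η.out × ν.out → lam.out × η.out := fun z => (i₀, J z)
  have hg : Function.Injective g := fun z w h => J.injective (congrArg Prod.snd h)
  have := nonempty_of_ne_zero (lam := lam) (Cardinal.aleph0_pos.trans_le hη).ne'
  refine not_descDist_of_tags (fun p t => ∃ δ, ∀ i, (g (δ, i), Y t i) ∈ p.1)
    (fun p q hqp t ⟨δ, hδ⟩ => ⟨δ, fun i => hqp (hδ i)⟩) (fun p => ?_) (fun p t => ?_)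
  · refine exists_forall_lt_of_mk_lt hκ (lt_of_le_of_lt ?_ hηκ)
    refine (Cardinal.mk_le_of_injective (f := fun t : {t | _} => t.2.choose)
      fun t t' h => ?_).trans (Cardinal.mk_out η).le
    have ht := t.2.choose_spec
    rw [show t.2.choose = t'.2.choose from h] at ht
    exact Subtype.ext (Y.injective (funext fun i => eq_of_mem (ht i) (t'.2.choose_spec i)))
  · obtain ⟨δ, hδ⟩ := exists_forall_notMem_dom p (by simp) hg
    have hgδ : Function.Injective fun i => g (δ, i) := fun i j h => congrArg Prod.snd (hg h)
    have hA : #(range fun i => g (δ, i)) < η := Cardinal.mk_range_le.trans_lt (by simpa using hν)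
    let v := Function.extend (fun i => g (δ, i)) (Y t) fun _ => false
    refine ⟨fill hη p _ hA v, fill_le, δ, fun i => ?_⟩
    simpa [v, hgδ.extend_apply] using
      mem_fill_of_notMem_dom (hA := hA) (v := v) (mem_range_self i) (hδ i)

theorem not_descDist_of_le_power {η lam κ ν : Cardinal.{u}} (hη : ℵ₀ ≤ η) (hlam : 0 < lam)
    (hκ : κ.IsRegular) (hηκ : η < κ) (h2κ : 2 ^< η < κ) (hν : ν < η) (hκν : κ ≤ η ^ ν) :
    ¬ DescDist (AddCond η lam) κ := by
  obtain ⟨i₀⟩ := Cardinal.nonempty_out hlam.ne'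
  obtain ⟨J⟩ : Nonempty (η.out × ν.out × η.out ↪ η.out) := by
    rw [← Cardinal.le_def]
    simp only [Cardinal.mk_prod, Cardinal.lift_id, Cardinal.mk_out]
    calc η * (ν * η) ≤ η * (η * η) := by gcongr
      _ = η := by rw [Cardinal.mul_eq_self hη, Cardinal.mul_eq_self hη]
  obtain ⟨X⟩ : Nonempty (κ.ord.ToType ↪ (ν.out → η.out)) := by
    simpa [← Cardinal.le_def, ← Cardinal.power_def] using hκν
  let g : η.out × ν.out × η.out → lam.out × η.out := fun z => (i₀, J z)
  have hg : Function.Injective g := fun z w h => J.injective (congrArg Prod.snd h)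
  have := nonempty_of_ne_zero (lam := lam) (Cardinal.aleph0_pos.trans_le hη).ne'
  -- unlike a binary code, marking the graph of `X t` with `true`s lets a condition code up to
  -- `#(dom p) ^ ν ≤ 2 ^< η` values in each block
  refine not_descDist_of_tags (fun p t => ∃ δ, ∀ i, (g (δ, i, X t i), true) ∈ p.1)
    (fun p q hqp t ⟨δ, hδ⟩ => ⟨δ, fun i => hqp (hδ i)⟩) (fun p => ?_) (fun p t => ?_)
  · let S : η.out → Set κ.ord.ToType := fun δ => {t | ∀ i, (g (δ, i, X t i), true) ∈ p.1}
    have hS : ∀ δ, #(S δ) ≤ 2 ^< η := fun δ =>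
      calc #(S δ) ≤ #(ν.out → dom p) := Cardinal.mk_le_of_injective
            (f := fun t i => ⟨g (δ, i, X t i), mem_dom.2 ⟨true, t.2 i⟩⟩) fun t t' h =>
              Subtype.ext <| X.injective <| funext fun i => by
                simpa [g] using congrArg (fun f => (f i).1) h
        _ = #(dom p) ^ ν := by simp
        _ ≤ (2 ^ #(dom p)) ^ ν := Cardinal.power_le_power_right (Cardinal.cantor _).le
        _ = 2 ^ (#(dom p) * ν) := (Cardinal.power_mul ..).symm
        _ ≤ 2 ^< η := Cardinal.le_powerlt 2 (Cardinal.mul_lt_of_lt hη (mk_dom_lt p) hν)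
    refine exists_forall_lt_of_mk_lt hκ ?_
    calc #{t | ∃ δ, ∀ i, (g (δ, i, X t i), true) ∈ p.1} ≤ #(⋃ δ, S δ) :=
          Cardinal.mk_le_mk_of_subset fun t ⟨δ, hδ⟩ => mem_iUnion.2 ⟨δ, hδ⟩
      _ ≤ #η.out * ⨆ δ, #(S δ) := Cardinal.mk_iUnion_le S
      _ ≤ η * 2 ^< η := by
          rw [Cardinal.mk_out]
          gcongr
          exact ciSup_le' hS
      _ < κ := Cardinal.mul_lt_of_lt hκ.aleph0_le hηκ h2κ
  · obtain ⟨δ, hδ⟩ := exists_forall_notMem_dom p (by simp) hg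
    have hA : #(range fun i => g (δ, i, X t i)) < η :=
      Cardinal.mk_range_le.trans_lt (by simpa using hν)
    exact ⟨fill hη p _ hA fun _ => true, fill_le, δ, fun i =>
      mem_fill_of_notMem_dom (mem_range_self i) (hδ (i, X t i))⟩

theorem not_descDist_of_le_lam {η lam κ : Cardinal.{u}} (hη : ℵ₀ ≤ η) (hκ : κ.IsRegular)
    (hηκ : η < κ) (hκlam : κ ≤ lam) : ¬ DescDist (AddCond η lam) κ := by
  obtain ⟨x₀⟩ := Cardinal.nonempty_out (Cardinal.aleph0_pos.trans_le hη).ne'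
  obtain ⟨e⟩ : Nonempty (κ.ord.ToType ↪ lam.out) := by simpa [← Cardinal.le_def] using hκlam
  have := nonempty_of_ne_zero (lam := lam) (Cardinal.aleph0_pos.trans_le hη).ne'
  refine not_descDist_of_tags (fun p t => ∃ x, (e t, x) ∈ dom p)
    (fun p q hqp t ⟨x, hx⟩ => ⟨x, dom_mono hqp hx⟩) (fun p => ?_) (fun p t => ?_)
  · refine exists_forall_lt_of_mk_lt hκ (lt_of_le_of_lt ?_ ((mk_dom_lt p).trans hηκ))
    calc #{t | ∃ x, (e t, x) ∈ dom p} ≤ #(e ⁻¹' (Prod.fst '' dom p)) :=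
          Cardinal.mk_le_mk_of_subset fun t ⟨x, hx⟩ => ⟨_, hx, rfl⟩
      _ ≤ #(Prod.fst '' dom p) := Cardinal.mk_preimage_of_injective _ _ e.injective
      _ ≤ #(dom p) := Cardinal.mk_image_le
  · have hA : #({(e t, x₀)} : Set (lam.out × η.out)) < η := by
      simpa using Cardinal.one_lt_aleph0.trans_le hη
    exact ⟨fill hη p _ hA fun _ => false, fill_le, x₀, subset_dom_fill rfl⟩

theorem not_descDist_of_lt_of_le {η lam κ : Cardinal.{u}} (hη : ℵ₀ ≤ η) (hlam : 0 < lam)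
    (hκ : κ.IsRegular) (hηκ : η < κ) (h : κ ≤ η ^< η * lam) : ¬ DescDist (AddCond η lam) κ := by
  by_cases h2 : κ ≤ 2 ^< η
  · obtain ⟨ν, hν, hκν⟩ := exists_lt_le_power_of_le_powerlt hκ hηκ h2
    exact not_descDist_of_le_two_power hη hlam hκ hηκ hν hκν
  by_cases hη' : κ ≤ η ^< η
  · obtain ⟨ν, hν, hκν⟩ := exists_lt_le_power_of_le_powerlt hκ hηκ hη'
    exact not_descDist_of_le_power hη hlam hκ hηκ (not_le.1 h2) hν hκν
  have hmax := h.trans (Cardinal.mul_le_max _ _)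
  simp only [le_max_iff, hη', false_or] at hmax
  exact not_descDist_of_le_lam hη hκ hηκ (hmax.resolve_right (hη.trans_lt hηκ).not_ge)

end AddForcing

open AddForcing in
/-- For `η ≥ ℵ₀`, `λ > 0` and regular infinite `κ`: `Add(η,λ)` is `κ`-descending
distributive if `κ < cf(η)` or `κ > (η·λ)^{<η}`, and it is not `κ`-descending
distributive if `cf(η) ≤ κ ≤ η^{<η}·λ`. -/
theorem statement7 (η lam : Cardinal.{u}) (hη : ℵ₀ ≤ η) (hlam : 0 < lam)
    (κ : Cardinal.{u}) (hκ : κ.IsRegular) :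
    ((κ < η.ord.cof ∨ (η * lam) ^< η < κ) → DescDist (AddCond η lam) κ) ∧
    ((η.ord.cof ≤ κ ∧ κ ≤ η ^< η * lam) → ¬ DescDist (AddCond η lam) κ) := by
  refine ⟨fun h => h.elim (descDist_of_lt_cof hη hκ.aleph0_le) (descDist_of_powerlt_lt hη hlam hκ),
    fun ⟨hcof, hle⟩ => ?_⟩
  obtain rfl | hcof := hcof.eq_or_lt
  · exact not_descDist_cof hη hlam
  obtain hκη | hηκ := lt_or_gt_of_ne fun h : κ = η => hcof.ne (h ▸ hκ.cof_ord)
  · exact not_descDist_of_cof_lt_of_lt hη hlam hκ hcof hκη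
  · exact not_descDist_of_lt_of_le hη hlam hκ hηκ hle
end

section
/- A filter F on a partially ordered set is κ-descending distributive if and only if it is cf(κ)-descending distributive, for every infinite cardinal κ. -/
universe u v

/-- A filter on a partially ordered set: a nonempty, upward closed, downward directed
subset. -/
def IsPOFilter {A : Type*} [Preorder A] (F : Set A) : Prop :=
  F.Nonempty ∧ (∀ a ∈ F, ∀ b, a ≤ b → b ∈ F) ∧
    ∀ a ∈ F, ∀ b ∈ F, ∃ c ∈ F, c ≤ a ∧ c ≤ b

/-- A filter `F` is `κ`-descending distributive if for every `κ`-sequence `(a_α)` of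
elements of `F` there is `b ∈ F` with `{α < κ : b ≤ a_α}` unbounded in `κ`. -/
def FilterDescDist {A : Type*} [Preorder A] (F : Set A) (κ : Cardinal) : Prop :=
  ∀ a : Ordinal → A, (∀ α, α < κ.ord → a α ∈ F) →
    ∃ b ∈ F, ∀ β, β < κ.ord → ∃ α, β ≤ α ∧ α < κ.ord ∧ b ≤ a α

/-- A filter `F` is `κ`-descending distributive if and only if it is `cf(κ)`-descending
distributive. -/
theorem statement9 {A : Type*} [PartialOrder A] (F : Set A) (hF : IsPOFilter F)
    (κ : Cardinal) (hκ : Cardinal.aleph0 ≤ κ) :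
    FilterDescDist F κ ↔ FilterDescDist F κ.ord.cof := by
  obtain ⟨f, hf⟩ := Ordinal.exists_fundamental_sequence κ.ord
  have hne : ∀ γ, γ < κ.ord → ∃ β, ∃ hβ : β < κ.ord.cof.ord, γ ≤ f β hβ := by
    intro γ hγ
    rw [← hf.blsub_eq] at hγ
    exact Ordinal.lt_blsub_iff.mp hγ
  constructor
  · intro h a ha
    -- transfer a sequence of length cof(κ) to one of length κ
    set S : Ordinal → Set Ordinal := fun γ => {β | ∃ hβ : β < κ.ord.cof.ord, γ ≤ f β hβ} with hS
    set g : Ordinal → Ordinal := fun γ => sInf (S γ) with hg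
    have hmem : ∀ γ, γ < κ.ord → g γ ∈ S γ := by
      intro γ hγ
      exact csInf_mem (hne γ hγ)
    obtain ⟨b, hb, hub⟩ := h (fun γ => a (g γ)) (by
      intro γ hγ
      obtain ⟨hlt, -⟩ := hmem γ hγ
      exact ha _ hlt)
    refine ⟨b, hb, ?_⟩
    intro β hβ
    obtain ⟨γ, hγ₁, hγ₂, hγ₃⟩ := hub (f β hβ) (hf.lt hβ)
    obtain ⟨hlt, hle⟩ := hmem γ hγ₂
    refine ⟨g γ, ?_, hlt, hγ₃⟩
    by_contra hcon
    push_neg at hcon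
    exact absurd (hγ₁.trans hle) (not_le.mpr (hf.strict_mono hlt hβ hcon))
  · intro h a ha
    obtain ⟨x₀, hx₀⟩ := hF.1
    obtain ⟨b, hb, hub⟩ := h (fun β => if hβ : β  < κ.ord.cof.ord then a (f β hβ) else x₀) (by
      intro β hβ
      rw [dif_pos hβ]
      exact ha _ (hf.lt hβ))
    refine ⟨b, hb, ?_⟩
    intro δ hδ
    obtain ⟨β₀, hβ₀, hle₀⟩ := hne δ hδ
    obtain ⟨β, hβ₁, hβ₂, hβ₃⟩ := hub β₀ hβ₀
    rw [dif_pos hβ₂] at hβ₃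
    exact ⟨f β hβ₂, hle₀.trans (hf.monotone hβ₀ hβ₂ hβ₁), hf.lt hβ₂, hβ₃⟩
end

section
/- For every infinite set X and every ordinal α with 0 < α < ℵ(X), one has ℵ(Inj(α, X)) = ℵ(X^α) and ℵ*(Inj(α, X)) = ℵ*(X^α), where Inj(α, X) is the set of injections from α into X and X^α the set of all functions from α to X. -/
universe u

/-- The Hartogs number `ℵ(X)`: the least ordinal `α` such that there is no injection
from `α` into `X`. -/
noncomputable def hartogsOrd (X : Type u) : Ordinal.{u} :=
  sInf {α : Ordinal.{u} | ¬ ∃ f : α.ToType → X, Function.Injective f}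

/-!
Since `α` injects into the infinite set `X`, there is an injection `e : X × α ↪ X`, and
`f ↦ (ξ ↦ e (f ξ, ξ))` embeds `X^α` into `Inj(α, X)`. Together with the inclusion
`Inj(α, X) ⊆ X^α`, Schröder–Bernstein makes the two sets equipotent, and both `ℵ` and `ℵ*`
are invariant under bijections.
-/

lemma hartogsOrd_congr {A B : Type u} (e : A ≃ B) : hartogsOrd A = hartogsOrd B := by
  unfold hartogsOrd
  congr 1
  ext β
  simp only [Set.mem_ofPred_eq, not_iff_not]
  constructor
  · rintro ⟨f, hf⟩
    exact ⟨e ∘ f, e.injective.comp hf⟩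
  · rintro ⟨f, hf⟩
    exact ⟨e.symm ∘ f, e.symm.injective.comp hf⟩

lemma lindenbaumOrd_congr {A B : Type u} (e : A ≃ B) : lindenbaumOrd A = lindenbaumOrd B := by
  unfold lindenbaumOrd
  congr 1
  ext β
  simp only [Set.mem_ofPred_eq, not_iff_not]
  constructor
  · rintro (h | ⟨f, hf⟩)
    · exact Or.inl h
    · exact Or.inr ⟨f ∘ e.symm, hf.comp e.symm.surjective⟩
  · rintro (h | ⟨f, hf⟩)
    · exact Or.inl h
    · exact Or.inr ⟨f ∘ e, hf.comp e.surjective⟩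

lemma exists_injective_of_lt_hartogsOrd {X : Type u} {α : Ordinal.{u}}
    (hα : α < hartogsOrd X) : ∃ f : α.ToType → X, Function.Injective f := by
  by_contra h
  exact not_le.2 hα (csInf_le' h)

def Function.Embedding.injectiveOfProd {A X Y : Type*} (e : Y × A ↪ X) :
    (A → Y) ↪ {f : A → X // Function.Injective f} where
  toFun f := ⟨fun a => e (f a, a), fun _ _ h => (Prod.ext_iff.1 (e.injective h)).2⟩
  inj' _ _ h := funext fun a =>
    (Prod.ext_iff.1 (e.injective (congrFun (congrArg Subtype.val h) a))).1

lemma nonempty_prod_embedding_of_embedding {A X : Type u} [Infinite X] (j : A ↪ X) :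
    Nonempty (X × A ↪ X) := by
  rw [← Cardinal.le_def, Cardinal.mk_prod, Cardinal.lift_id, Cardinal.lift_id]
  calc Cardinal.mk X * Cardinal.mk A
      ≤ Cardinal.mk X * Cardinal.mk X :=
        mul_le_mul_right (Cardinal.mk_le_of_injective j.injective) _
    _ = Cardinal.mk X := Cardinal.mul_eq_self (Cardinal.aleph0_le_mk X)

lemma nonempty_injective_equiv_fun {A X : Type u} [Infinite X] (j : A ↪ X) :
    Nonempty ({f : A → X // Function.Injective f} ≃ (A → X)) := by
  obtain ⟨e⟩ := nonempty_prod_embedding_of_embedding j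
  exact Function.Embedding.antisymm (Function.Embedding.subtype _) e.injectiveOfProd

theorem statement15_general {X : Type u} (hX : Infinite X) (α : Ordinal.{u})
    (hα : α < hartogsOrd X) :
    hartogsOrd {f : α.ToType → X // Function.Injective f} = hartogsOrd (α.ToType → X) ∧
    lindenbaumOrd {f : α.ToType → X // Function.Injective f} =
      lindenbaumOrd (α.ToType → X) := by
  obtain ⟨j, hj⟩ := exists_injective_of_lt_hartogsOrd hα
  obtain ⟨e⟩ := nonempty_injective_equiv_fun ⟨j, hj⟩
  exact ⟨hartogsOrd_congr e, lindenbaumOrd_congr e⟩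

/-- For infinite `X` and `0 < α < ℵ(X)`, `ℵ(Inj(α,X)) = ℵ(X^α)` and
`ℵ*(Inj(α,X)) = ℵ*(X^α)`. -/
theorem statement15 {X : Type u} (hX : Infinite X) (α : Ordinal.{u})
    (h0 : 0 < α) (hα : α < hartogsOrd X) :
    hartogsOrd {f : α.ToType → X // Function.Injective f} = hartogsOrd (α.ToType → X) ∧
    lindenbaumOrd {f : α.ToType → X // Function.Injective f} =
      lindenbaumOrd (α.ToType → X) :=
  statement15_general hX α hα
end

section
/- For every set X, sup{ℵ(X^α) : α < ℵ(X)} = sup{ℵ(α^α) : α < ℵ(X)}, where X^α denotes the set of all functions from the ordinal α to X and α^α the set of all functions from α to α. -/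
universe u

open Cardinal Ordinal

lemma exists_injective_toType_iff {X : Type u} {α : Ordinal.{u}} :
    (∃ f : α.ToType → X, Function.Injective f) ↔ α.card ≤ #X := by
  rw [← mk_toType, le_def]
  exact ⟨fun ⟨f, hf⟩ => ⟨⟨f, hf⟩⟩, fun ⟨f⟩ => ⟨f, f.injective⟩⟩

lemma hartogsOrd_eq_ord_succ (X : Type u) : hartogsOrd X = (Order.succ #X).ord := by
  have hS : {α : Ordinal.{u} | ¬ ∃ f : α.ToType → X, Function.Injective f} =
      Set.Ici (Order.succ #X).ord := by
    ext α
    rw [Set.mem_ofPred_eq, exists_injective_toType_iff, not_le, Set.mem_Ici, ord_le,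
      Order.succ_le_iff]
  rw [hartogsOrd, hS, csInf_Ici]

lemma lt_hartogsOrd_iff {X : Type u} {α : Ordinal.{u}} : α < hartogsOrd X ↔ α.card ≤ #X := by
  rw [hartogsOrd_eq_ord_succ, lt_ord, Order.lt_succ_iff]

lemma hartogsOrd_mono {X Y : Type u} (h : #X ≤ #Y) : hartogsOrd X ≤ hartogsOrd Y := by
  rw [hartogsOrd_eq_ord_succ, hartogsOrd_eq_ord_succ]
  exact ord_le_ord.2 (Order.succ_le_succ h)

lemma power_le_power_self {a b : Cardinal.{u}} (h : a ≤ b) : b ^ a ≤ b ^ b := by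
  rcases eq_or_ne b 0 with rfl | hb
  · rw [power_zero]
    exact zero_power_le a
  · exact power_le_power_left hb h

/-- For every set `X`, `sup{ℵ(X^α) : α < ℵ(X)} = sup{ℵ(α^α) : α < ℵ(X)}`. -/
theorem statement16 (X : Type u) :
    (⨆ α : Set.Iio (hartogsOrd X), hartogsOrd ((α.1).ToType → X)) =
      ⨆ α : Set.Iio (hartogsOrd X), hartogsOrd ((α.1).ToType → (α.1).ToType) := by
  have hX : (#X).ord < hartogsOrd X := by rw [lt_hartogsOrd_iff, card_ord]
  have : Nonempty (Set.Iio (hartogsOrd X)) := ⟨⟨_, hX⟩⟩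
  refine le_antisymm (ciSup_le fun ⟨α, hα⟩ => ?_) (ciSup_le fun ⟨α, hα⟩ => ?_)
  · have hle : #(α.ToType → X) ≤ #((#X).ord.ToType → (#X).ord.ToType) := by
      simp only [← power_def, mk_toType, card_ord]
      exact power_le_power_self (lt_hartogsOrd_iff.1 hα)
    exact le_ciSup_of_le Ordinal.bddAbove_of_small ⟨_, hX⟩ (hartogsOrd_mono hle)
  · have hle : #(α.ToType → α.ToType) ≤ #(α.ToType → X) := by
      simp only [← power_def, mk_toType]
      exact power_le_power_right (lt_hartogsOrd_iff.1 hα)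
    exact le_ciSup_of_le Ordinal.bddAbove_of_small ⟨α, hα⟩ (hartogsOrd_mono hle)
end
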